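/- Let \mathfrak{g} be a Lie algebra with an \mathfrak{sl}_2-triple \{f, h, e\} and let h_{\mathcal{C}} \in \mathfrak{g} commute with f, h, e. Let f_{\mathcal{C}} \in \mathfrak{g} satisfy [h_{\mathcal{C}}, f_{\mathcal{C}}] = -2 f_{\mathcal{C}} and [h, f_{\mathcal{C}}] = 0, and let m \geq 0 and \tilde{f}_{\mathcal{C}} = ad_e^m(f_{\mathcal{C}}). Then for h_0 := h + (m+1) h_{\mathcal{C}}, one has [h_0, f + \tilde{f}_{\mathcal{C}}] = -2 (f + \tilde{f}_{\mathcal{C}}). -/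
import Mathlib

lemma aux_bracket_ad {L : Type*} [LieRing L] [LieAlgebra ℂ L]
    (x e y : L) (c : ℂ) (hxe : ⁅x, e⁆ = 0) (hxy : ⁅x, y⁆ = c • y) (m : ℕ) :
    ⁅x, ((LieAlgebra.ad ℂ L e) ^ m) y⁆ = c • ((LieAlgebra.ad ℂ L e) ^ m) y := by
  induction m with
  | zero => simpa using hxy
  | succ n ih =>
      rw [pow_succ', Module.End.mul_apply]
      have : (LieAlgebra.ad ℂ L e) (((LieAlgebra.ad ℂ L e) ^ n) y)
          = ⁅e, ((LieAlgebra.ad ℂ L e) ^ n) y⁆ := rfl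
      rw [this, leibniz_lie, hxe, ih]
      simp [lie_smul]

/-- Key computation of Proposition 3.4: for `h₀ = h + (m+1)·h_C`,
`[h₀, f + ad_e^m(f_C)] = -2 (f + ad_e^m(f_C))`. -/
theorem h0_bracket_f_tilde {L : Type*} [LieRing L] [LieAlgebra ℂ L]
    (f h e hC fC : L)
    (hhe : ⁅h, e⁆ = (2 : ℂ) • e) (hhf : ⁅h, f⁆ = (-2 : ℂ) • f) (hef : ⁅e, f⁆ = h)
    (hCf : ⁅hC, f⁆ = 0) (hCh : ⁅hC, h⁆ = 0) (hCe : ⁅hC, e⁆ = 0)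
    (hCfC : ⁅hC, fC⁆ = (-2 : ℂ) • fC) (hhfC : ⁅h, fC⁆ = 0) (m : ℕ) :
    ⁅h + ((m : ℂ) + 1) • hC, f + ((LieAlgebra.ad ℂ L e) ^ m) fC⁆ =
      (-2 : ℂ) • (f + ((LieAlgebra.ad ℂ L e) ^ m) fC) := by
  have hC_ad : ⁅hC, ((LieAlgebra.ad ℂ L e) ^ m) fC⁆
      = (-2 : ℂ) • ((LieAlgebra.ad ℂ L e) ^ m) fC :=
    aux_bracket_ad hC e fC (-2) hCe hCfC m
  have h_ad : ∀ k : ℕ, ⁅h, ((LieAlgebra.ad ℂ L e) ^ k) fC⁆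
      = ((2 : ℂ) * k) • ((LieAlgebra.ad ℂ L e) ^ k) fC := by
    intro k
    induction k with
    | zero => simpa using hhfC
    | succ n ih =>
        rw [pow_succ', Module.End.mul_apply]
        have hrw : (LieAlgebra.ad ℂ L e) (((LieAlgebra.ad ℂ L e) ^ n) fC)
            = ⁅e, ((LieAlgebra.ad ℂ L e) ^ n) fC⁆ := rfl
        rw [hrw, leibniz_lie, hhe, ih]
        rw [smul_lie, lie_smul, ← hrw, ← add_smul]
        push_cast
        ring_nf
  rw [add_lie, lie_add, lie_add, smul_lie, smul_lie, hhf, hCf, hC_ad, h_ad m]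
  rw [smul_smul, smul_add, smul_zero, zero_add, add_assoc, ← add_smul]
  ring_nf
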